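/- Let φ : Γ → ℂ be a function with φ(e) = 1. Suppose π is a unitary representation of G = Γ≀𝔖∞ on a complex Hilbert space H with a cyclic unit vector ξ such that ⟨π(sγ)ξ, ξ⟩ = φ_reg(sγ) for all s ∈ 𝔖∞ and γ ∈ Γ^∞_e (i.e. ⟨π(sγ)ξ, ξ⟩ = ∏_k φ(γ_k) if s is the identity permutation and = 0 otherwise). Then π is a factor representation: every operator in the center π(G)′ ∩ π(G)″ is a scalar multiple of the identity. -/

import Mathlib

open scoped Classical ComplexOrder
open Filter Topology

noncomputable section

namespace DN

local notation "⟪" x ", " y "⟫" => @inner ℂ _ _ x y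

/-- The group `𝔖∞` of finitely supported permutations of `ℕ`. -/
def SInf : Subgroup (Equiv.Perm ℕ) where
  carrier := {s | {i | s i ≠ i}.Finite}
  one_mem' := by simp
  mul_mem' := by
    intro s t hs ht
    refine Set.Finite.subset (hs.union ht) fun i hi => ?_
    simp only [Set.mem_setOf_eq, Set.mem_union, Equiv.Perm.mul_apply] at hi ⊢
    by_contra h
    push_neg at h
    rw [h.2, h.1] at hi
    exact hi rfl
  inv_mem' := by
    intro s hs
    refine Set.Finite.subset hs fun i hi => ?_
    simp only [Set.mem_setOf_eq] at hi ⊢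
    intro h
    exact hi (Equiv.Perm.inv_eq_iff_eq.mpr h.symm)

theorem mem_SInf (s : Equiv.Perm ℕ) : s ∈ SInf ↔ {i | s i ≠ i}.Finite := Iff.rfl

/-- The group `Γ^∞_e` of finitely supported sequences in `Γ`. -/
def GammaE (Γ : Type*) [Group Γ] : Subgroup (ℕ → Γ) where
  carrier := {γ | {i | γ i ≠ 1}.Finite}
  one_mem' := by simp
  mul_mem' := by
    intro f g hf hg
    refine Set.Finite.subset (hf.union hg) fun i hi => ?_
    simp only [Set.mem_setOf_eq, Set.mem_union, Pi.mul_apply] at hi ⊢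
    by_contra h
    push_neg at h
    rw [h.1, h.2] at hi
    exact hi (one_mul 1)
  inv_mem' := by
    intro f hf
    refine Set.Finite.subset hf fun i hi => ?_
    simp only [Set.mem_setOf_eq, Pi.inv_apply, ne_eq, inv_eq_one] at hi ⊢
    exact hi

theorem mem_GammaE {Γ : Type*} [Group Γ] (γ : ℕ → Γ) :
    γ ∈ GammaE Γ ↔ {i | γ i ≠ 1}.Finite := Iff.rfl

/-- The permutation action of `Equiv.Perm ℕ` on `ℕ → Γ`. -/
def permMulAut (Γ : Type*) [Group Γ] (s : Equiv.Perm ℕ) : MulAut (ℕ → Γ) where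
  toFun γ := γ ∘ s.symm
  invFun γ := γ ∘ s
  left_inv γ := by funext i; simp [Function.comp]
  right_inv γ := by funext i; simp [Function.comp]
  map_mul' γ δ := rfl

def permAction (Γ : Type*) [Group Γ] : Equiv.Perm ℕ →* MulAut (ℕ → Γ) where
  toFun := permMulAut Γ
  map_one' := by ext γ i; rfl
  map_mul' s t := by ext γ i; rfl

/-- The (big) wreath product `(ℕ → Γ) ⋊ Perm ℕ`. -/
abbrev W (Γ : Type*) [Group Γ] := (ℕ → Γ) ⋊[permAction Γ] Equiv.Perm ℕ

/-- The wreath product `G = Γ ≀ 𝔖∞`, as the subgroup of `W Γ` of finitely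
supported elements. -/
def WG (Γ : Type*) [Group Γ] : Subgroup (W Γ) where
  carrier := {g | {i | g.right i ≠ i}.Finite ∧ {i | g.left i ≠ 1}.Finite}
  one_mem' := by
    constructor
    · convert Set.finite_empty using 1
      ext i; simp
    · convert Set.finite_empty using 1
      ext i; simp
  mul_mem' := by
    rintro a b ⟨ha1, ha2⟩ ⟨hb1, hb2⟩
    constructor
    · refine Set.Finite.subset (ha1.union hb1) fun i hi => ?_
      simp only [Set.mem_setOf_eq, Set.mem_union, SemidirectProduct.mul_right,
        Equiv.Perm.mul_apply] at hi ⊢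
      by_contra h
      push_neg at h
      rw [h.2, h.1] at hi
      exact hi rfl
    · refine Set.Finite.subset (ha2.union (hb2.image a.right)) fun i hi => ?_
      simp only [Set.mem_setOf_eq, SemidirectProduct.mul_left, Pi.mul_apply] at hi
      by_contra h
      simp only [Set.mem_union, Set.mem_setOf_eq, Set.mem_image, not_or, not_exists,
        not_and, not_not] at h
      obtain ⟨h1, h2⟩ := h
      apply hi
      have hb : b.left (a.right⁻¹ i) = 1 := by
        by_contra hc
        exact h2 (a.right⁻¹ i) hc (by simp)
      have hrfl : (permAction Γ a.right b.left) i = b.left (a.right⁻¹ i) := rfl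
      rw [h1, one_mul, hrfl, hb]
  inv_mem' := by
    rintro a ⟨ha1, ha2⟩
    constructor
    · refine Set.Finite.subset ha1 fun i hi => ?_
      simp only [Set.mem_setOf_eq, SemidirectProduct.inv_right] at hi ⊢
      intro h
      exact hi (Equiv.Perm.inv_eq_iff_eq.mpr h.symm)
    · refine Set.Finite.subset (Set.Finite.preimage (a.right.injective.injOn) ha2)
        fun i hi => ?_
      simp only [Set.mem_setOf_eq] at hi
      simp only [Set.mem_preimage, Set.mem_setOf_eq]
      intro h
      apply hi
      have hrfl : (a⁻¹).left i = (a.left (a.right i))⁻¹ := rfl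
      rw [hrfl, h, inv_one]

theorem mem_WG {Γ : Type*} [Group Γ] (g : W Γ) :
    g ∈ WG Γ ↔ {i | g.right i ≠ i}.Finite ∧ {i | g.left i ≠ 1}.Finite := Iff.rfl

/-- The canonical copy of `𝔖∞` inside `Γ ≀ 𝔖∞`. -/
def permW {Γ : Type*} [Group Γ] (s : SInf) : WG Γ :=
  ⟨SemidirectProduct.inr s.1, by
    rw [mem_WG]
    constructor
    · have h : (SemidirectProduct.inr s.1 : W Γ).right = s.1 := SemidirectProduct.right_inr _
      rw [h]
      exact s.2
    · convert Set.finite_empty using 1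
      ext i; simp⟩

/-- The canonical copy of `Γ^∞_e` inside `Γ ≀ 𝔖∞`. -/
def seqW {Γ : Type*} [Group Γ] (γ : GammaE Γ) : WG Γ :=
  ⟨SemidirectProduct.inl γ.1, by
    rw [mem_WG]
    constructor
    · convert Set.finite_empty using 1
      ext i; simp
    · have h : (SemidirectProduct.inl γ.1 : W Γ).left = γ.1 := SemidirectProduct.left_inl _
      rw [h]
      exact γ.2⟩

/-- The support of an element of `Γ ≀ 𝔖∞`. -/
def supp {Γ : Type*} [Group Γ] (g : WG Γ) : Set ℕ :=
  {i | (g : W Γ).right i ≠ i ∨ (g : W Γ).left i ≠ 1}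

/-- Positive definiteness of a function on a group. -/
def IsPosDef {G : Type*} [Group G] (φ : G → ℂ) : Prop :=
  ∀ (m : ℕ) (g : Fin m → G) (c : Fin m → ℂ),
    0 ≤ ∑ i, ∑ j, c i * (starRingEnd ℂ) (c j) * φ ((g j)⁻¹ * g i)

/-- A state on a group: normalized positive definite function. -/
def IsState {G : Type*} [Group G] (φ : G → ℂ) : Prop := φ 1 = 1 ∧ IsPosDef φ

/-- `𝔖∞`-centrality of a function on `Γ ≀ 𝔖∞`. -/
def IsSCentral {Γ : Type*} [Group Γ] (φ : WG Γ → ℂ) : Prop :=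
  ∀ (s : SInf) (g : WG Γ), φ (permW s * g * (permW s)⁻¹) = φ g

/-- The commutant of a set of bounded operators. -/
def commutant {H : Type*} [NormedAddCommGroup H] [InnerProductSpace ℂ H]
    (S : Set (H →L[ℂ] H)) : Set (H →L[ℂ] H) := {T | ∀ A ∈ S, T * A = A * T}

variable {Γ : Type*} [Group Γ]
variable {H : Type*} [NormedAddCommGroup H] [InnerProductSpace ℂ H] [CompleteSpace H]

/-- The image set `π(G)` of a representation. -/
def repSet (π : WG Γ →* (H →L[ℂ] H)) : Set (H →L[ℂ] H) := Set.range fun g : WG Γ => π g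

/-- The von Neumann algebra `π(G)''` (double commutant). -/
def vN (π : WG Γ →* (H →L[ℂ] H)) : Set (H →L[ℂ] H) := commutant (commutant (repSet π))

/-- The representation is factorial: the center `π(G)' ∩ π(G)''` consists of scalars. -/
def IsFactorial (π : WG Γ →* (H →L[ℂ] H)) : Prop :=
  ∀ T ∈ commutant (repSet π) ∩ vN π, ∃ c : ℂ, T = c • (1 : H →L[ℂ] H)

/-- `(π, H, ξ)` is a GNS triple for `φ`. -/
structure IsGNS (φ : WG Γ → ℂ) (π : WG Γ →* (H →L[ℂ] H)) (ξ : H) : Prop where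
  unitary : ∀ g, π g ∈ unitary (H →L[ℂ] H)
  norm_one : ‖ξ‖ = 1
  cyclic : Dense ((Submodule.span ℂ (Set.range fun g : WG Γ => π g ξ) : Submodule ℂ H) : Set H)
  inner_eq : ∀ g, φ g = ⟪ξ, π g ξ⟫

theorem swap_mem_SInf (a b : ℕ) : Equiv.swap a b ∈ SInf := by
  rw [mem_SInf]
  refine Set.Finite.subset ((Set.finite_singleton a).insert b) fun i hi => ?_
  simp only [Set.mem_setOf_eq] at hi
  simp only [Set.mem_insert_iff, Set.mem_singleton_iff]
  by_contra h
  push_neg at h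
  exact hi (Equiv.swap_apply_of_ne_of_ne h.2 h.1)

/-- The transposition `(a b)` as an element of `Γ ≀ 𝔖∞`. -/
def swapW {Γ : Type*} [Group Γ] (a b : ℕ) : WG Γ := permW ⟨Equiv.swap a b, swap_mem_SInf a b⟩

def omegaFun (n i : ℕ) : ℕ := if i < n then i + n else if i < 2 * n then i - n else i

theorem omegaFun_invol (n i : ℕ) : omegaFun n (omegaFun n i) = i := by
  unfold omegaFun
  split_ifs <;> first | contradiction | omega

/-- Olshanski's permutation `ω_n`. -/
def omegaPerm (n : ℕ) : Equiv.Perm ℕ :=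
  ⟨omegaFun n, omegaFun n, omegaFun_invol n, omegaFun_invol n⟩

theorem omegaPerm_mem (n : ℕ) : omegaPerm n ∈ SInf := by
  rw [mem_SInf]
  refine Set.Finite.subset (Set.finite_Iio (2 * n)) fun i hi => ?_
  simp only [Set.mem_setOf_eq] at hi
  simp only [Set.mem_Iio]
  by_contra h
  push_neg at h
  apply hi
  show omegaFun n i = i
  unfold omegaFun
  split_ifs <;> first | contradiction | omega

/-- `ω_n` as an element of `Γ ≀ 𝔖∞`. -/
def omegaW {Γ : Type*} [Group Γ] (n : ℕ) : WG Γ := permW ⟨omegaPerm n, omegaPerm_mem n⟩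

def sigmaFun (n i : ℕ) : ℕ := if i + 1 < n then i + 1 else if i + 1 = n then 0 else i

def sigmaInvFun (n i : ℕ) : ℕ := if i < n then (if i = 0 then n - 1 else i - 1) else i

theorem sigma_left_inv (n i : ℕ) : sigmaInvFun n (sigmaFun n i) = i := by
  unfold sigmaFun sigmaInvFun
  split_ifs <;> first | contradiction | omega

theorem sigma_right_inv (n i : ℕ) : sigmaFun n (sigmaInvFun n i) = i := by
  unfold sigmaFun sigmaInvFun
  split_ifs <;> first | contradiction | omega

/-- The cycle `σ_n = (0 1 2 ... n-1)`. -/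
def sigmaPerm (n : ℕ) : Equiv.Perm ℕ :=
  ⟨sigmaFun n, sigmaInvFun n, sigma_left_inv n, sigma_right_inv n⟩

theorem sigmaPerm_mem (n : ℕ) : sigmaPerm n ∈ SInf := by
  rw [mem_SInf]
  refine Set.Finite.subset (Set.finite_Iio n) fun i hi => ?_
  simp only [Set.mem_setOf_eq] at hi
  simp only [Set.mem_Iio]
  by_contra h
  push_neg at h
  apply hi
  show sigmaFun n i = i
  unfold sigmaFun
  split_ifs <;> first | contradiction | omega

/-- The cycle of `s` through the point `i` (the paper's `s_p` for the orbit `p` of `i`). -/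
def cycleAt (s : Equiv.Perm ℕ) (i : ℕ) : Equiv.Perm ℕ where
  toFun j := if s.SameCycle i j then s j else j
  invFun j := if s.SameCycle i j then s⁻¹ j else j
  left_inv j := by
    by_cases h : s.SameCycle i j
    · have h2 : s.SameCycle i (s j) := Equiv.Perm.sameCycle_apply_right.mpr h
      simp [h, h2]
    · simp [h]
  right_inv j := by
    by_cases h : s.SameCycle i j
    · have h2 : s.SameCycle i (s⁻¹ j) := Equiv.Perm.sameCycle_symm_apply_right.mpr h
      simp [h, h2]
    · simp [h]

theorem cycleAt_mem {s : Equiv.Perm ℕ} (hs : s ∈ SInf) (i : ℕ) : cycleAt s i ∈ SInf := by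
  rw [mem_SInf] at hs ⊢
  refine Set.Finite.subset hs fun j hj => ?_
  simp only [Set.mem_setOf_eq] at hj ⊢
  intro h
  apply hj
  show (if s.SameCycle i j then s j else j) = j
  split_ifs with hc
  · exact h
  · rfl

/-- The generalized cycle of `g = sγ` corresponding to the orbit of `i` under `s`. -/
def genCycle {Γ : Type*} [Group Γ] (g : WG Γ) (i : ℕ) : WG Γ :=
  permW ⟨cycleAt (g : W Γ).right i, cycleAt_mem g.2.1 i⟩ *
  seqW ⟨fun k => if ((g : W Γ).right).SameCycle i k then (g : W Γ).left ((g : W Γ).right k)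
      else 1, by
    rw [mem_GammaE]
    refine Set.Finite.subset (Set.Finite.preimage ((g : W Γ).right.injective.injOn) g.2.2)
      fun k hk => ?_
    simp only [Set.mem_setOf_eq] at hk
    simp only [Set.mem_preimage, Set.mem_setOf_eq]
    by_cases hsc : ((g : W Γ).right).SameCycle i k
    · rw [if_pos hsc] at hk; exact hk
    · rw [if_neg hsc] at hk; exact absurd rfl hk⟩

/-- The von Neumann algebra `𝔄_j` generated by `O_j` and the `π(γ)` with `γ` supported at `j`. -/
def Aj (π : WG Γ →* (H →L[ℂ] H)) (O : H →L[ℂ] H) (j : ℕ) : Set (H →L[ℂ] H) :=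
  commutant (commutant
    ({O} ∪ {T | ∃ γ : GammaE Γ, (∀ i, i ≠ j → (γ : ℕ → Γ) i = 1) ∧ T = π (seqW γ)}))

/-!
A central operator `T` commutes with `π(G)` and with everything in `π(G)′`. Conjugation by the
involution `ω_n` (swapping `[0, n)` and `[n, 2n)`) preserves `φ_reg`, so right translation by
`ω_n` on the orbit `π(G)ξ` extends to an isometry in `π(G)′`, and therefore
`g ↦ ⟪ξ, T π(g) ξ⟫` is invariant under conjugation by `ω_n`. For large `n` the element
`ω_n g ω_n` is supported away from any fixed `a`, so `φ_reg(a · ω_n g ω_n) = φ_reg(a) φ_reg(g)`: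
`π(ω_n g ω_n) ξ → φ_reg(g) ξ` weakly. Hence `⟪ξ, T π(g) ξ⟫ = φ_reg(g) ⟪ξ, T ξ⟫`, which forces
`T ξ = ⟪ξ, T ξ⟫ ξ`, and cyclicity of `ξ` makes `T` a scalar.
-/

section InnerProductSpace

open Submodule

variable {𝕜 E F : Type*} [RCLike 𝕜] [NormedAddCommGroup E] [InnerProductSpace 𝕜 E]
  [NormedAddCommGroup F] [InnerProductSpace 𝕜 F]

theorem eq_of_forall_inner_eq_of_dense_span {s : Set E} (hs : Dense (span 𝕜 s : Set E))
    {x y : E} (h : ∀ v ∈ s, inner 𝕜 v x = inner 𝕜 v y) : x = y :=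
  hs.eq_of_inner_right 𝕜 fun _ hv => span_induction h (by simp)
    (fun _ _ _ _ ha hb => by rw [inner_add_left, inner_add_left, ha, hb])
    (fun _ _ _ ha => by rw [inner_smul_left, inner_smul_left, ha]) hv

theorem tendsto_inner_of_dense_span {ι : Type*} {l : Filter ι} {u : ι → E} {v : E} (C : NNReal)
    (hu : ∀ i, ‖u i‖ ≤ C) {s : Set E} (hs : Dense (span 𝕜 s : Set E))
    (h : ∀ y ∈ s, Tendsto (fun i => inner 𝕜 y (u i)) l (𝓝 (inner 𝕜 y v))) (y : E) :
    Tendsto (fun i => inner 𝕜 y (u i)) l (𝓝 (inner 𝕜 y v)) := by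
  have hequi : Equicontinuous fun i (y : E) => inner 𝕜 y (u i) :=
    (LipschitzWith.uniformEquicontinuous _ C fun i => LipschitzWith.of_dist_le_mul fun y z => by
      rw [dist_eq_norm, dist_eq_norm, ← inner_sub_left, mul_comm]
      exact (norm_inner_le_norm _ _).trans (by gcongr; exact hu i)).equicontinuous
  refine hs.induction (fun y hy => ?_) (hequi.isClosed_setOfPred_tendsto (by fun_prop)) y
  induction hy using span_induction with
  | mem y hy => exact h y hy
  | zero => simpa using tendsto_const_nhds
  | add y z _ _ hy hz => simpa only [inner_add_left] using hy.add hz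
  | smul c y _ hy => simpa only [inner_smul_left] using hy.const_mul _

theorem exists_linearIsometry_apply_eq_of_inner_eq [CompleteSpace F] {ι : Type*} {v : ι → E}
    {w : ι → F} (hv : Dense (span 𝕜 (Set.range v) : Set E))
    (h : ∀ i j, inner 𝕜 (w i) (w j) = inner 𝕜 (v i) (v j)) :
    ∃ R : E →ₗᵢ[𝕜] F, ∀ i, R (v i) = w i := by
  set P := Finsupp.linearCombination 𝕜 v
  set Q := Finsupp.linearCombination 𝕜 w
  have hinner : ∀ c d, inner 𝕜 (Q c) (Q d) = inner 𝕜 (P c) (P d) := by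
    intro c d
    simp only [P, Q, Finsupp.linearCombination_apply, Finsupp.sum, sum_inner, inner_sum,
      inner_smul_left, inner_smul_right, h]
  have hnorm : ∀ c, ‖Q c‖ = ‖P c‖ := fun c => by
    rw [norm_eq_sqrt_re_inner (𝕜 := 𝕜), norm_eq_sqrt_re_inner (𝕜 := 𝕜), hinner]
  have hdense : DenseRange P := by
    rwa [DenseRange, ← LinearMap.coe_range, Finsupp.range_linearCombination]
  have hRP := LinearMap.extendOfNorm_eq hdense ⟨1, fun c => by rw [hnorm, one_mul]⟩
  refine ⟨⟨(Q.extendOfNorm P).toLinearMap, fun x => hdense.induction_on x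
    (isClosed_eq (by fun_prop) (by fun_prop)) fun c => ?_⟩, fun i => ?_⟩
  · simpa [P, Q] using hRP (Finsupp.single i 1)
  · simp [hRP, hnorm]

end InnerProductSpace

section UnitaryRepresentation

variable {G : Type*} [Group G] {π : G →* (H →L[ℂ] H)}

theorem adjoint_eq_map_inv (hπ : ∀ g, π g ∈ unitary (H →L[ℂ] H)) (g : G) :
    ContinuousLinearMap.adjoint (π g) = π g⁻¹ := by
  rw [← ContinuousLinearMap.star_eq_adjoint]
  exact left_inv_eq_right_inv (Unitary.star_mul_self_of_mem (hπ g))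
    (by rw [← map_mul, mul_inv_cancel, map_one])

theorem inner_map_left (hπ : ∀ g, π g ∈ unitary (H →L[ℂ] H)) (g : G) (x y : H) :
    ⟪π g x, y⟫ = ⟪x, π g⁻¹ y⟫ := by
  rw [← adjoint_eq_map_inv hπ, ContinuousLinearMap.adjoint_inner_right]

omit [CompleteSpace H] in
theorem map_apply_map_apply (π : G →* (H →L[ℂ] H)) (g h : G) (x : H) :
    π g (π h x) = π (g * h) x := by
  rw [map_mul]
  rfl

omit [CompleteSpace H] in
theorem apply_comm_of_mem_commutant {S : Set (H →L[ℂ] H)} {T A : H →L[ℂ] H}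
    (hT : T ∈ commutant S) (hA : A ∈ S) (x : H) : T (A x) = A (T x) :=
  DFunLike.congr_fun (hT A hA) x

variable {ξ : H} (hπ : ∀ g, π g ∈ unitary (H →L[ℂ] H))
  (hξ : Dense (Submodule.span ℂ (Set.range fun g => π g ξ) : Set H))
include hπ hξ

theorem exists_mem_commutant_apply_eq_mul (w : G)
    (hw : ∀ g, ⟪ξ, π (w⁻¹ * g * w) ξ⟫ = ⟪ξ, π g ξ⟫) :
    ∃ R : H →ₗᵢ[ℂ] H, R.toContinuousLinearMap ∈ commutant (Set.range π) ∧
      ∀ g, R (π g ξ) = π (g * w) ξ := by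
  obtain ⟨R, hR⟩ := exists_linearIsometry_apply_eq_of_inner_eq (w := fun g => π (g * w) ξ) hξ
    fun g h => by
      rw [inner_map_left hπ, map_apply_map_apply, inner_map_left hπ, map_apply_map_apply,
        ← hw (g⁻¹ * h)]
      group
  refine ⟨R, ?_, hR⟩
  rintro _ ⟨g, rfl⟩
  refine ContinuousLinearMap.ext_on hξ ?_
  rintro _ ⟨h, rfl⟩
  show R (π g (π h ξ)) = π g (R (π h ξ))
  rw [map_apply_map_apply, hR, hR, map_apply_map_apply, mul_assoc]

theorem inner_apply_conj_eq_of_mem_center (w : G)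
    (hw : ∀ g, ⟪ξ, π (w⁻¹ * g * w) ξ⟫ = ⟪ξ, π g ξ⟫) {T : H →L[ℂ] H}
    (hT : T ∈ commutant (Set.range π) ∩ commutant (commutant (Set.range π))) (g : G) :
    ⟪ξ, T (π (w⁻¹ * g * w) ξ)⟫ = ⟪ξ, T (π g ξ)⟫ := by
  obtain ⟨R, hRcomm, hR⟩ := exists_mem_commutant_apply_eq_mul hπ hξ w hw
  have hRξ : R ξ = π w ξ := by simpa using hR 1
  calc ⟪ξ, T (π (w⁻¹ * g * w) ξ)⟫ = ⟪ξ, T (π w⁻¹ (R (π g ξ)))⟫ := by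
        rw [hR, map_apply_map_apply, mul_assoc]
    _ = ⟪ξ, π w⁻¹ (R (T (π g ξ)))⟫ := by
        rw [apply_comm_of_mem_commutant hT.1 ⟨_, rfl⟩]
        exact congrArg _ (congrArg _ (apply_comm_of_mem_commutant hT.2 hRcomm _))
    _ = ⟪R ξ, R (T (π g ξ))⟫ := by rw [← inv_inv w, ← inner_map_left hπ, inv_inv, hRξ]
    _ = ⟪ξ, T (π g ξ)⟫ := R.inner_map_map _ _

theorem exists_eq_smul_one_of_mem_center {ι : Type*} (l : Filter ι) [l.NeBot] (w : ι → G)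
    (hw : ∀ i g, ⟪ξ, π ((w i)⁻¹ * g * w i) ξ⟫ = ⟪ξ, π g ξ⟫)
    (hmul : ∀ a g, ∀ᶠ i in l,
      ⟪ξ, π (a * ((w i)⁻¹ * g * w i)) ξ⟫ = ⟪ξ, π a ξ⟫ * ⟪ξ, π g ξ⟫)
    {T : H →L[ℂ] H}
    (hT : T ∈ commutant (Set.range π) ∩ commutant (commutant (Set.range π))) :
    ∃ c : ℂ, T = c • 1 := by
  have hweak : ∀ g y, Tendsto (fun i => ⟪y, π ((w i)⁻¹ * g * w i) ξ⟫) l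
      (𝓝 ⟪y, ⟪ξ, π g ξ⟫ • ξ⟫) := fun g =>
    tendsto_inner_of_dense_span ‖ξ‖₊ (fun i => (Unitary.norm_map ⟨_, hπ _⟩ ξ).le) hξ <| by
      rintro _ ⟨a, rfl⟩
      refine tendsto_const_nhds.congr' ?_
      filter_upwards [hmul a⁻¹ g] with i hi
      rw [inner_smul_right, inner_map_left hπ, inner_map_left hπ, map_apply_map_apply, hi,
        mul_comm]
  have hcoef : ∀ g, ⟪ξ, T (π g ξ)⟫ = ⟪ξ, π g ξ⟫ * ⟪ξ, T ξ⟫ := fun g => by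
    have hlim := hweak g (ContinuousLinearMap.adjoint T ξ)
    simp only [ContinuousLinearMap.adjoint_inner_left, inner_apply_conj_eq_of_mem_center hπ hξ _
      (hw _) hT, inner_smul_right] at hlim
    exact tendsto_nhds_unique tendsto_const_nhds hlim
  set c := ⟪ξ, T ξ⟫
  have hTξ : T ξ = c • ξ := eq_of_forall_inner_eq_of_dense_span hξ <| by
    rintro _ ⟨a, rfl⟩
    rw [inner_map_left hπ, ← apply_comm_of_mem_commutant hT.1 ⟨_, rfl⟩, hcoef, inner_smul_right,
      inner_map_left hπ, mul_comm]
  refine ⟨c, ContinuousLinearMap.ext_on hξ ?_⟩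
  rintro _ ⟨a, rfl⟩
  rw [apply_comm_of_mem_commutant hT.1 ⟨a, rfl⟩, hTξ, map_smul]
  rfl

end UnitaryRepresentation

section WreathProduct

@[simp]
theorem permAction_apply (s : Equiv.Perm ℕ) (γ : ℕ → Γ) (i : ℕ) :
    permAction Γ s γ i = γ (s⁻¹ i) :=
  rfl

@[simp]
theorem omegaPerm_inv (n : ℕ) : (omegaPerm n)⁻¹ = omegaPerm n :=
  rfl

theorem omegaPerm_mul_self (n : ℕ) : omegaPerm n * omegaPerm n = 1 :=
  Equiv.ext (omegaFun_invol n)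

theorem omegaPerm_apply_of_lt {n i : ℕ} (h : i < n) : omegaPerm n i = i + n := by
  show omegaFun n i = i + n
  rw [omegaFun, if_pos h]

theorem omegaPerm_apply_add_of_lt {n i : ℕ} (h : i < n) : omegaPerm n (i + n) = i := by
  show omegaFun n (i + n) = i
  rw [omegaFun, if_neg (by omega), if_pos (by omega), Nat.add_sub_cancel]

theorem omegaPerm_conj_eq_one_iff {n : ℕ} {s : Equiv.Perm ℕ} :
    omegaPerm n * s * omegaPerm n = 1 ↔ s = 1 :=
  conj_eq_one_iff (a := omegaPerm n) (b := s)

theorem omegaW_inv (n : ℕ) : (omegaW n : WG Γ)⁻¹ = omegaW n := by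
  refine inv_eq_of_mul_eq_one_right (Subtype.ext ?_)
  show SemidirectProduct.inr (omegaPerm n) * SemidirectProduct.inr (omegaPerm n) = (1 : W Γ)
  rw [← map_mul, omegaPerm_mul_self, map_one]

theorem omegaW_conj_right (n : ℕ) (g : WG Γ) :
    ((omegaW n * g * omegaW n : WG Γ) : W Γ).right = omegaPerm n * (g : W Γ).right * omegaPerm n :=
  rfl

theorem omegaW_conj_left (n : ℕ) (g : WG Γ) :
    ((omegaW n * g * omegaW n : WG Γ) : W Γ).left = (g : W Γ).left ∘ omegaPerm n := by
  funext i
  simp [omegaW, permW]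

theorem finite_supp (g : WG Γ) : (supp g).Finite :=
  g.2.1.union g.2.2

theorem eventually_supp_subset_Iio (g : WG Γ) : ∀ᶠ n in atTop, supp g ⊆ Set.Iio n := by
  obtain ⟨b, hb⟩ := (finite_supp g).bddAbove
  filter_upwards [eventually_gt_atTop b] with n hn i hi using (hb hi).trans_lt hn

theorem right_apply_and_left_apply_of_supp_subset_Iio {g : WG Γ} {n i : ℕ}
    (hg : supp g ⊆ Set.Iio n) (hi : n ≤ i) : (g : W Γ).right i = i ∧ (g : W Γ).left i = 1 := by
  have : i ∉ supp g := fun h => (hg h).not_ge hi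
  simpa [supp, not_or] using this

def phiReg (φ : Γ → ℂ) (g : WG Γ) : ℂ :=
  if (g : W Γ).right = 1 then ∏ᶠ k, φ ((g : W Γ).left k) else 0

theorem phiReg_omegaW_conj (φ : Γ → ℂ) (n : ℕ) (g : WG Γ) :
    phiReg φ (omegaW n * g * omegaW n) = phiReg φ g := by
  unfold phiReg
  rw [omegaW_conj_right, omegaPerm_conj_eq_one_iff, omegaW_conj_left]
  split_ifs
  · exact finprod_comp_equiv (omegaPerm n) (f := fun k => φ ((g : W Γ).left k))
  · rfl

theorem finprod_map_mul_of_forall_or {ι M N : Type*} [Monoid M] [CommMonoid N] {φ : M → N}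
    (hφ : φ 1 = 1) {a b : ι → M} (ha : {i | a i ≠ 1}.Finite) (hb : {i | b i ≠ 1}.Finite)
    (h : ∀ i, a i = 1 ∨ b i = 1) :
    ∏ᶠ i, φ (a i * b i) = (∏ᶠ i, φ (a i)) * ∏ᶠ i, φ (b i) := by
  have hfin : ∀ c : ι → M, {i | c i ≠ 1}.Finite → (Function.mulSupport fun i => φ (c i)).Finite :=
    fun c hc => hc.subset fun i hi hci => hi (by simp [hci, hφ])
  rw [finprod_congr fun i => show φ (a i * b i) = φ (a i) * φ (b i) by
    rcases h i with h | h <;> simp [h, hφ]]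
  exact finprod_mul_distrib (hfin a ha) (hfin b hb)

/-- Once `n` exceeds both supports, `ω_n g ω_n` is supported in `[n, 2n)`, disjointly from `a`. -/
theorem phiReg_mul_omegaW_conj {φ : Γ → ℂ} (hφ : φ 1 = 1) {a g : WG Γ} {n : ℕ}
    (ha : supp a ⊆ Set.Iio n) (hg : supp g ⊆ Set.Iio n) :
    phiReg φ (a * (omegaW n * g * omegaW n)) = phiReg φ a * phiReg φ g := by
  have ha' := fun i (hi : n ≤ i) => right_apply_and_left_apply_of_supp_subset_Iio ha hi
  have hg' := fun i (hi : n ≤ i) => right_apply_and_left_apply_of_supp_subset_Iio hg hi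
  have hdisj : (a : W Γ).right.Disjoint (omegaPerm n * (g : W Γ).right * omegaPerm n) := by
    intro i
    rcases lt_or_ge i n with hi | hi
    · right
      simp only [Equiv.Perm.mul_apply, omegaPerm_apply_of_lt hi, (hg' (i + n) (by omega)).1,
        omegaPerm_apply_add_of_lt hi]
    · exact Or.inl (ha' i hi).1
  unfold phiReg
  have hright : ((a * (omegaW n * g * omegaW n) : WG Γ) : W Γ).right
      = (a : W Γ).right * (omegaPerm n * (g : W Γ).right * omegaPerm n) := rfl
  rw [hright, hdisj.mul_eq_one_iff, omegaPerm_conj_eq_one_iff]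
  by_cases hpa : (a : W Γ).right = 1
  swap
  · simp [hpa]
  by_cases hpg : (g : W Γ).right = 1
  swap
  · simp [hpg]
  have hleft : ((a * (omegaW n * g * omegaW n) : WG Γ) : W Γ).left
      = fun i => (a : W Γ).left i * (g : W Γ).left (omegaPerm n i) := by
    rw [Subgroup.coe_mul, SemidirectProduct.mul_left, hpa, map_one, omegaW_conj_left]
    rfl
  rw [if_pos ⟨hpa, hpg⟩, if_pos hpa, if_pos hpg, hleft,
    finprod_map_mul_of_forall_or hφ a.2.2 (g.2.2.preimage (omegaPerm n).injective.injOn)]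
  · rw [finprod_comp_equiv (omegaPerm n) (f := fun k => φ ((g : W Γ).left k))]
  · intro i
    rcases lt_or_ge i n with hi | hi
    · exact Or.inr (by rw [omegaPerm_apply_of_lt hi]; exact (hg' _ (by omega)).2)
    · exact Or.inl (ha' i hi).2

theorem permW_mul_seqW_eq (g : WG Γ) :
    permW ⟨(g : W Γ).right, g.2.1⟩ *
      seqW ⟨(g : W Γ).left ∘ (g : W Γ).right, g.2.2.preimage (g : W Γ).right.injective.injOn⟩
      = g := by
  refine Subtype.ext (SemidirectProduct.ext ?_ ?_)
  · funext i
    simp [permW, seqW]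
  · simp [permW, seqW]

omit [CompleteSpace H] in
theorem inner_eq_phiReg {φ : Γ → ℂ} {π : WG Γ →* (H →L[ℂ] H)} {ξ : H}
    (hrep : ∀ (s : SInf) (γ : GammaE Γ),
      ⟪ξ, π (permW s * seqW γ) ξ⟫ =
        if (s : Equiv.Perm ℕ) = 1 then ∏ᶠ k, φ ((γ : ℕ → Γ) k) else 0)
    (g : WG Γ) : ⟪ξ, π g ξ⟫ = phiReg φ g := by
  have h := hrep ⟨_, g.2.1⟩
    ⟨(g : W Γ).left ∘ (g : W Γ).right, g.2.2.preimage (g : W Γ).right.injective.injOn⟩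
  rw [permW_mul_seqW_eq] at h
  rw [h, phiReg]
  split_ifs
  · exact finprod_comp_equiv (g : W Γ).right (f := fun k => φ ((g : W Γ).left k))
  · rfl

end WreathProduct

theorem statement_3_general {Γ : Type*} [Group Γ] {H : Type*} [NormedAddCommGroup H]
    [InnerProductSpace ℂ H] [CompleteSpace H]
    (φ : Γ → ℂ) (hφone : φ 1 = 1)
    (π : WG Γ →* (H →L[ℂ] H)) (ξ : H)
    (hunit : ∀ g, π g ∈ unitary (H →L[ℂ] H))
    (hcyclic :
      Dense ((Submodule.span ℂ (Set.range fun g : WG Γ => π g ξ) : Submodule ℂ H) : Set H))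
    (hrep : ∀ (s : SInf) (γ : GammaE Γ),
      ⟪ξ, π (permW s * seqW γ) ξ⟫ =
        if (s : Equiv.Perm ℕ) = 1 then ∏ᶠ k, φ ((γ : ℕ → Γ) k) else 0) :
    IsFactorial π := by
  intro T hT
  have hφreg := inner_eq_phiReg hrep
  refine exists_eq_smul_one_of_mem_center hunit hcyclic atTop omegaW (fun n g => ?_)
    (fun a g => ?_) hT
  · rw [omegaW_inv, hφreg, hφreg, phiReg_omegaW_conj]
  · filter_upwards [eventually_supp_subset_Iio a, eventually_supp_subset_Iio g] with n ha hg
    rw [omegaW_inv, hφreg, hφreg, hφreg, phiReg_mul_omegaW_conj hφone ha hg]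

theorem statement_3 {Γ : Type*} [Group Γ] {H : Type*} [NormedAddCommGroup H]
    [InnerProductSpace ℂ H] [CompleteSpace H]
    (φ : Γ → ℂ) (hφone : φ 1 = 1)
    (π : WG Γ →* (H →L[ℂ] H)) (ξ : H)
    (hunit : ∀ g, π g ∈ unitary (H →L[ℂ] H))
    (hnorm : ‖ξ‖ = 1)
    (hcyclic :
      Dense ((Submodule.span ℂ (Set.range fun g : WG Γ => π g ξ) : Submodule ℂ H) : Set H))
    (hrep : ∀ (s : SInf) (γ : GammaE Γ),
      ⟪ξ, π (permW s * seqW γ) ξ⟫ =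
        if (s : Equiv.Perm ℕ) = 1 then ∏ᶠ k, φ ((γ : ℕ → Γ) k) else 0) :
    IsFactorial π :=
  statement_3_general φ hφone π ξ hunit hcyclic hrep

end DN
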